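/- arXiv:2110.02292 — 6 statements merged into one kernel-verified Lean document; each statement's English description precedes it below -/
import Mathlib

section
/- Let f be an unbounded modulus function. Then the following are equivalent: (1) the statistical ideal 𝔍_s equals the f-ideal 𝔍_f; (2) lim_{k → ∞} g_f(k) = 0, where g_f(k) := limsup_{n → ∞} f(n)/f(2^k n); (3) lim_{t → ∞} h_f(t) = 0, where h_f(t) := limsup_{n → ∞} f(n)/f(t·n) for real t ≥ 1. -/
open Filter Set Topology

/-- `f : ℝ → ℝ` (viewed on `ℝ⁺`) is an unbounded modulus function. -/
def IsModulus (f : ℝ → ℝ) : Prop :=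
  (∀ x : ℝ, 0 ≤ x → 0 ≤ f x) ∧
  (∀ x : ℝ, 0 ≤ x → (f x = 0 ↔ x = 0)) ∧
  (∀ x y : ℝ, 0 ≤ x → 0 ≤ y → f (x + y) ≤ f x + f y) ∧
  (∀ x y : ℝ, 0 ≤ x → x ≤ y → f x ≤ f y) ∧
  ContinuousWithinAt f (Set.Ici 0) 0 ∧
  Tendsto (fun n : ℕ => f n) atTop atTop

/-- `α_A(n) = |A ∩ [1,n]|`. -/
noncomputable def alphaCount (A : Set ℕ) (n : ℕ) : ℕ := (A ∩ Set.Icc 1 n).ncard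

/-- The statistical ideal: sets of natural density zero. -/
def statIdeal : Set (Set ℕ) :=
  {A | Tendsto (fun n : ℕ => (alphaCount A n : ℝ) / n) atTop (nhds 0)}

/-- The `f`-ideal: sets of `f`-density zero. -/
def fIdeal (f : ℝ → ℝ) : Set (Set ℕ) :=
  {A | Tendsto (fun n : ℕ => f (alphaCount A n) / f n) atTop (nhds 0)}

/-- `g_f(k) = limsup_n f(n)/f(2^k n)`. -/
noncomputable def gmod (f : ℝ → ℝ) (k : ℕ) : ℝ :=
  Filter.limsup (fun n : ℕ => f n / f (2 ^ k * n)) atTop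

/-- `h_f(t) = limsup_n f(n)/f(t n)` for real `t`. -/
noncomputable def hmod (f : ℝ → ℝ) (t : ℝ) : ℝ :=
  Filter.limsup (fun n : ℕ => f n / f (t * n)) atTop

/-!
Subadditivity gives `f(n) ≤ m·f(α_A(n))` whenever `n ≤ m·α_A(n)`, so `𝔍_f ⊆ 𝔍_s` for every
modulus. Conversely, if `h_f(t) < ε` then eventually `f(a)/f(n) < ε` for all `a ≤ n/t`, and a set
of density zero has `α_A(n) ≤ n/t` eventually. As `h_f` is antitone and `g_f(k) = h_f(2^k)`,
`g_f → 0` iff `h_f → 0`. Finally, if `g_f ≥ δ > 0`, choose `n_0 < n_1 < ⋯` with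
`f(n_k)/f(2^{k+1} n_k) > δ/2` and let `A` be the union of the blocks `(2^k n_k, 2^k n_k + n_k]`.
For `2^j n_j < N ≤ 2^{j+1} n_{j+1}` only the first `j + 1` blocks meet `[1, N]`, so
`α_A(N) ≤ (j+1) n_j < (j+1) N / 2^j` and `A ∈ 𝔍_s`; but at the right end `N` of the `k`-th block
`f(α_A(N))/f(N) ≥ f(n_k)/f(2^{k+1} n_k) > δ/2`, so `A ∉ 𝔍_f`.
-/

theorem AntitoneOn.tendsto_nhds_zero {α : Type*} [Preorder α] {u : α → ℝ} {a : α}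
    (hu : AntitoneOn u (Ici a)) (hu₀ : ∀ x ∈ Ici a, 0 ≤ u x)
    (hsmall : ∀ ε > 0, ∃ x ∈ Ici a, u x < ε) : Tendsto u atTop (𝓝 0) := by
  refine tendsto_order.2 ⟨fun b hb => ?_, fun ε hε => ?_⟩
  · filter_upwards [eventually_ge_atTop a] with x hx using hb.trans_le (hu₀ x hx)
  · obtain ⟨x, hx, hxε⟩ := hsmall ε hε
    filter_upwards [eventually_ge_atTop x] with y hy
    exact (hu hx (le_trans hx hy) hy).trans_lt hxε

theorem Monotone.exists_mem_Ioc_succ {lo : ℕ → ℕ} (hlo : Monotone lo) {J N m : ℕ}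
    (hJ : lo J < N) (hm : N ≤ lo m) : ∃ j, J ≤ j ∧ N ∈ Ioc (lo j) (lo (j + 1)) := by
  induction m with
  | zero => exact absurd (hJ.trans_le hm) (hlo (Nat.zero_le J)).not_gt
  | succ m ih =>
    by_cases hNm : N ≤ lo m
    · exact ih hNm
    · refine ⟨m, ?_, lt_of_not_ge hNm, hm⟩
      by_contra! hmJ
      exact (hJ.trans_le hm).not_ge (hlo hmJ)

theorem tendsto_zero_of_le_on_Ioc {u c : ℕ → ℝ} {lo : ℕ → ℕ} (hlo : Monotone lo)
    (hlo_top : Tendsto lo atTop atTop) (hu₀ : 0 ≤ u) (hc : Tendsto c atTop (𝓝 0))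
    (hle : ∀ j N, N ∈ Ioc (lo j) (lo (j + 1)) → u N ≤ c j) : Tendsto u atTop (𝓝 0) := by
  refine tendsto_order.2
    ⟨fun b hb => .of_forall fun N => hb.trans_le (hu₀ N), fun ε hε => ?_⟩
  obtain ⟨J, hJ⟩ := eventually_atTop.1 (hc.eventually (gt_mem_nhds hε))
  filter_upwards [eventually_gt_atTop (lo J)] with N hN
  obtain ⟨m, hm⟩ := (hlo_top.eventually_ge_atTop N).exists
  obtain ⟨j, hJj, hj⟩ := hlo.exists_mem_Ioc_succ hN hm
  exact (hle j N hj).trans_lt (hJ j hJj)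

namespace IsModulus

variable {f : ℝ → ℝ}

theorem nonneg (hf : IsModulus f) {x : ℝ} (hx : 0 ≤ x) : 0 ≤ f x := hf.1 x hx

theorem map_zero (hf : IsModulus f) : f 0 = 0 := (hf.2.1 0 le_rfl).2 rfl

theorem pos (hf : IsModulus f) {x : ℝ} (hx : 0 < x) : 0 < f x :=
  (hf.nonneg hx.le).lt_of_ne fun h => hx.ne' ((hf.2.1 x hx.le).1 h.symm)

theorem map_add_le (hf : IsModulus f) {x y : ℝ} (hx : 0 ≤ x) (hy : 0 ≤ y) :
    f (x + y) ≤ f x + f y :=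
  hf.2.2.1 x y hx hy

theorem mono (hf : IsModulus f) {x y : ℝ} (hx : 0 ≤ x) (hxy : x ≤ y) : f x ≤ f y :=
  hf.2.2.2.1 x y hx hxy

theorem tendsto_atTop (hf : IsModulus f) : Tendsto (fun n : ℕ => f n) atTop atTop :=
  hf.2.2.2.2.2

theorem map_nat_mul_le (hf : IsModulus f) (m : ℕ) {x : ℝ} (hx : 0 ≤ x) :
    f (m * x) ≤ m * f x := by
  induction m with
  | zero => simp [hf.map_zero]
  | succ m ih =>
    calc f ((m + 1 : ℕ) * x) = f (m * x + x) := by push_cast; ring_nf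
      _ ≤ f (m * x) + f x := hf.map_add_le (by positivity) hx
      _ ≤ (m + 1 : ℕ) * f x := by push_cast; linarith

theorem isBoundedUnder_le_ratio (hf : IsModulus f) {t : ℝ} (ht : 1 ≤ t) :
    IsBoundedUnder (· ≤ ·) atTop fun n : ℕ => f n / f (t * n) :=
  isBoundedUnder_of ⟨1, fun n => div_le_one_of_le₀
    (hf.mono n.cast_nonneg (le_mul_of_one_le_left n.cast_nonneg ht))
    (hf.nonneg (by positivity))⟩

theorem isCoboundedUnder_le_ratio (hf : IsModulus f) {t : ℝ} (ht : 0 ≤ t) :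
    IsCoboundedUnder (· ≤ ·) atTop fun n : ℕ => f n / f (t * n) :=
  isCoboundedUnder_le_of_le atTop (x := 0) fun n =>
    div_nonneg (hf.nonneg n.cast_nonneg) (hf.nonneg (by positivity))

theorem hmod_nonneg (hf : IsModulus f) {t : ℝ} (ht : 1 ≤ t) : 0 ≤ hmod f t :=
  le_limsup_of_frequently_le
    (.of_forall fun n => div_nonneg (hf.nonneg n.cast_nonneg) (hf.nonneg (by positivity)))
    (hf.isBoundedUnder_le_ratio ht)

theorem hmod_antitoneOn (hf : IsModulus f) : AntitoneOn (hmod f) (Ici 1) := by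
  intro s (hs : 1 ≤ s) t (ht : 1 ≤ t) hst
  refine limsup_le_limsup ?_ (hf.isCoboundedUnder_le_ratio (by linarith))
    (hf.isBoundedUnder_le_ratio hs)
  filter_upwards [eventually_gt_atTop 0] with n hn
  have hn : (0 : ℝ) < n := Nat.cast_pos.2 hn
  exact div_le_div_of_nonneg_left (hf.nonneg hn.le) (hf.pos (by positivity))
    (hf.mono (by positivity) (by gcongr))

theorem gmod_nonneg (hf : IsModulus f) (k : ℕ) : 0 ≤ gmod f k :=
  hf.hmod_nonneg (one_le_pow₀ one_le_two)

theorem gmod_antitone (hf : IsModulus f) : Antitone (gmod f) := fun _ _ hkl =>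
  hf.hmod_antitoneOn (mem_Ici.2 (one_le_pow₀ one_le_two))
    (mem_Ici.2 (one_le_pow₀ one_le_two)) (pow_le_pow_right₀ one_le_two hkl)

theorem tendsto_gmod_iff_tendsto_hmod (hf : IsModulus f) :
    Tendsto (gmod f) atTop (𝓝 0) ↔ Tendsto (hmod f) atTop (𝓝 0) := by
  refine ⟨fun h => hf.hmod_antitoneOn.tendsto_nhds_zero (fun _ ht => hf.hmod_nonneg ht)
    fun ε hε => ?_, fun h => h.comp (tendsto_pow_atTop_atTop_of_one_lt one_lt_two)⟩
  obtain ⟨k, hk⟩ := (h.eventually (gt_mem_nhds hε)).exists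
  exact ⟨2 ^ k, mem_Ici.2 (one_le_pow₀ one_le_two), hk⟩

theorem fIdeal_subset_statIdeal (hf : IsModulus f) : fIdeal f ⊆ statIdeal := by
  intro A (hA : Tendsto _ _ _)
  refine tendsto_order.2 ⟨fun b hb => .of_forall fun n => hb.trans_le (by positivity),
    fun ε hε => ?_⟩
  obtain ⟨m, hm⟩ := exists_nat_gt ε⁻¹
  have hm₀ : (0 : ℝ) < m := (inv_pos.2 hε).trans hm
  filter_upwards [hA.eventually (gt_mem_nhds (inv_pos.2 hm₀)), eventually_gt_atTop 0]
    with n hfn hn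
  have hn : (0 : ℝ) < n := Nat.cast_pos.2 hn
  set a : ℕ := alphaCount A n
  by_contra! hεa
  have hna : (n : ℝ) ≤ m * a := by
    rw [le_div_iff₀ hn] at hεa
    nlinarith [(inv_lt_iff_one_lt_mul₀ hε).1 hm]
  have hfna : f n ≤ m * f a :=
    (hf.mono hn.le hna).trans (hf.map_nat_mul_le m a.cast_nonneg)
  refine hfn.not_ge ?_
  rw [le_div_iff₀ (hf.pos hn), inv_mul_le_iff₀ hm₀]
  exact hfna

theorem eventually_div_lt_of_hmod_lt (hf : IsModulus f) {t ε : ℝ} (ht : 1 ≤ t) (hε : 0 < ε)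
    (htε : hmod f t < ε) : ∀ᶠ n : ℕ in atTop, ∀ a : ℕ, t * a ≤ n → f a / f n < ε := by
  obtain ⟨M, hM⟩ := eventually_atTop.1
    ((eventually_lt_of_limsup_lt htε (hf.isBoundedUnder_le_ratio ht)).and
      (eventually_gt_atTop 0))
  filter_upwards [hf.tendsto_atTop.eventually_gt_atTop (f M / ε), eventually_gt_atTop 0]
    with n hfn hn a ha
  have hfn₀ : 0 < f n := hf.pos (Nat.cast_pos.2 hn)
  rcases le_or_gt M a with hMa | haM
  · obtain ⟨hlt, ha₀⟩ := hM a hMa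
    have ha₀ : (0 : ℝ) < a := Nat.cast_pos.2 ha₀
    calc f a / f n ≤ f a / f (t * a) :=
          div_le_div_of_nonneg_left (hf.nonneg ha₀.le) (hf.pos (by positivity))
            (hf.mono (by positivity) ha)
      _ < ε := hlt
  · calc f a / f n ≤ f M / f n := by
          gcongr
          exact hf.mono a.cast_nonneg (by exact_mod_cast haM.le)
      _ < ε := by
          rw [div_lt_iff₀ hfn₀]
          rw [div_lt_iff₀ hε] at hfn
          linarith

theorem statIdeal_subset_fIdeal (hf : IsModulus f) (h : Tendsto (hmod f) atTop (𝓝 0)) :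
    statIdeal ⊆ fIdeal f := by
  intro A (hA : Tendsto _ _ _)
  refine tendsto_order.2 ⟨fun b hb => .of_forall fun n => hb.trans_le
    (div_nonneg (hf.nonneg (Nat.cast_nonneg _)) (hf.nonneg n.cast_nonneg)), fun ε hε => ?_⟩
  obtain ⟨t, htε, ht⟩ := ((h.eventually (gt_mem_nhds hε)).and (eventually_ge_atTop 1)).exists
  have ht₀ : 0 < t := by linarith
  filter_upwards [hf.eventually_div_lt_of_hmod_lt ht hε htε,
    hA.eventually (gt_mem_nhds (inv_pos.2 ht₀)), eventually_gt_atTop 0] with n hn hαn hn₀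
  refine hn _ ?_
  rw [div_lt_iff₀ (Nat.cast_pos.2 hn₀), lt_inv_mul_iff₀ ht₀] at hαn
  exact hαn.le

end IsModulus

def dyadicBlocks (n : ℕ → ℕ) : Set ℕ := ⋃ k, Ioc (2 ^ k * n k) (2 ^ k * n k + n k)

section dyadicBlocks

variable {n : ℕ → ℕ}

theorem monotone_two_pow_mul (hn : Monotone n) : Monotone fun k => 2 ^ k * n k :=
  (pow_right_mono₀ one_le_two).mul' hn

theorem alphaCount_dyadicBlocks_le (hn : Monotone n) {j N : ℕ}
    (hN : N ≤ 2 ^ (j + 1) * n (j + 1)) : alphaCount (dyadicBlocks n) N ≤ (j + 1) * n j := by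
  let blocks :=
    (Finset.range (j + 1)).biUnion fun i => Finset.Ioc (2 ^ i * n i) (2 ^ i * n i + n i)
  have hsub : dyadicBlocks n ∩ Icc 1 N ⊆ blocks := by
    rintro x ⟨hx, -, hxN⟩
    obtain ⟨i, hi⟩ := mem_iUnion.1 hx
    have hij : i < j + 1 := lt_of_not_ge fun hji =>
      (hi.1.trans_le hxN).not_ge (hN.trans (monotone_two_pow_mul hn hji))
    exact Finset.mem_coe.2
      (Finset.mem_biUnion.2 ⟨i, Finset.mem_range.2 hij, Finset.mem_Ioc.2 hi⟩)
  calc alphaCount (dyadicBlocks n) N ≤ blocks.card :=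
        (ncard_le_ncard hsub (Finset.finite_toSet _)).trans (ncard_coe_finset _).le
    _ ≤ ∑ i ∈ Finset.range (j + 1), n i := Finset.card_biUnion_le.trans (by simp)
    _ ≤ ∑ i ∈ Finset.range (j + 1), n j :=
        Finset.sum_le_sum fun i hi => hn (Nat.lt_succ_iff.1 (Finset.mem_range.1 hi))
    _ = (j + 1) * n j := by simp

theorem le_alphaCount_dyadicBlocks (k : ℕ) :
    n k ≤ alphaCount (dyadicBlocks n) (2 ^ k * n k + n k) := by
  calc n k = (Ioc (2 ^ k * n k) (2 ^ k * n k + n k)).ncard := by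
        rw [← Finset.coe_Ioc, ncard_coe_finset]; simp
    _ ≤ _ := ncard_le_ncard (t := dyadicBlocks n ∩ Icc 1 _)
        (fun x hx => ⟨mem_iUnion.2 ⟨k, hx⟩, by have := hx.1; omega, hx.2⟩)
        ((finite_Icc _ _).inter_of_right _)

theorem tendsto_succ_div_two_pow :
    Tendsto (fun j : ℕ => ((j : ℝ) + 1) / 2 ^ j) atTop (𝓝 0) := by
  simpa [add_div] using (tendsto_pow_const_div_const_pow_of_one_lt 1 one_lt_two).add
    (tendsto_inv_atTop_zero.comp (tendsto_pow_atTop_atTop_of_one_lt one_lt_two))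

theorem dyadicBlocks_mem_statIdeal (hn : StrictMono n) : dyadicBlocks n ∈ statIdeal := by
  refine tendsto_zero_of_le_on_Ioc (monotone_two_pow_mul hn.monotone)
    (tendsto_atTop_mono (fun k => Nat.le_mul_of_pos_left _ (by positivity)) hn.tendsto_atTop)
    (fun N => by positivity) tendsto_succ_div_two_pow fun j N hN => ?_
  have hα := alphaCount_dyadicBlocks_le hn.monotone hN.2
  have hcount : alphaCount (dyadicBlocks n) N * 2 ^ j ≤ (j + 1) * N :=
    calc alphaCount (dyadicBlocks n) N * 2 ^ j ≤ (j + 1) * n j * 2 ^ j := by gcongr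
      _ = (j + 1) * (2 ^ j * n j) := by ring
      _ ≤ (j + 1) * N := by gcongr; exact hN.1.le
  rw [div_le_div_iff₀ (by exact_mod_cast pos_of_gt hN.1) (by positivity)]
  exact_mod_cast hcount

theorem IsModulus.dyadicBlocks_notMem_fIdeal {f : ℝ → ℝ} (hf : IsModulus f)
    (hn : StrictMono n) {δ : ℝ} (hδ : 0 < δ) (hratio : ∀ k, δ ≤ f (n k) / f (2 ^ (k + 1) * n k)) :
    dyadicBlocks n ∉ fIdeal f := by
  intro (hA : Tendsto _ _ _)
  have hend : Tendsto (fun k => 2 ^ k * n k + n k) atTop atTop :=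
    tendsto_atTop_mono (fun k => Nat.le_add_left _ _) hn.tendsto_atTop
  obtain ⟨k, hk, hk₀⟩ := (((hA.comp hend).eventually (gt_mem_nhds hδ)).and
    (hn.tendsto_atTop.eventually_gt_atTop 0)).exists
  have hk₀ : (0 : ℝ) < n k := Nat.cast_pos.2 hk₀
  have hend_le : 2 ^ k * n k + n k ≤ 2 ^ (k + 1) * n k := by
    have := Nat.le_mul_of_pos_left (n k) (Nat.two_pow_pos k)
    rw [pow_succ]
    linarith
  have hle : f (n k) / f (2 ^ (k + 1) * n k) ≤
      f (alphaCount (dyadicBlocks n) (2 ^ k * n k + n k)) / f ((2 ^ k * n k + n k : ℕ) : ℝ) :=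
    div_le_div₀ (hf.nonneg (Nat.cast_nonneg _))
      (hf.mono hk₀.le (by exact_mod_cast le_alphaCount_dyadicBlocks k))
      (hf.pos (by positivity)) (hf.mono (Nat.cast_nonneg _) (by exact_mod_cast hend_le))
  exact ((hratio k).trans hle).not_gt hk

end dyadicBlocks

theorem IsModulus.tendsto_gmod_of_statIdeal_eq {f : ℝ → ℝ} (hf : IsModulus f)
    (h : statIdeal = fIdeal f) : Tendsto (gmod f) atTop (𝓝 0) := by
  refine (hf.gmod_antitone.antitoneOn (Ici 0)).tendsto_nhds_zero
    (fun k _ => hf.gmod_nonneg k) ?_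
  by_contra! hδ
  obtain ⟨δ, hδ, hgδ⟩ := hδ
  have hfreq : ∀ k, ∃ᶠ m : ℕ in atTop, δ / 2 < f m / f (2 ^ (k + 1) * m) := fun k =>
    frequently_lt_of_lt_limsup (hf.isCoboundedUnder_le_ratio (by positivity))
      ((half_lt_self hδ).trans_le (hgδ (k + 1) (Nat.zero_le _)))
  obtain ⟨n, hn, hδn⟩ := extraction_forall_of_frequently hfreq
  exact hf.dyadicBlocks_notMem_fIdeal hn (half_pos hδ) (fun k => (hδn k).le)
    (h ▸ dyadicBlocks_mem_statIdeal hn)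

theorem statIdeal_eq_fIdeal_tfae (f : ℝ → ℝ) (hf : IsModulus f) :
    List.TFAE [statIdeal = fIdeal f,
      Tendsto (fun k : ℕ => gmod f k) atTop (nhds 0),
      Tendsto (fun t : ℝ => hmod f t) atTop (nhds 0)] := by
  tfae_have 1 → 2 := hf.tendsto_gmod_of_statIdeal_eq
  tfae_have 2 ↔ 3 := hf.tendsto_gmod_iff_tendsto_hmod
  tfae_have 3 → 1 := fun h =>
    (hf.statIdeal_subset_fIdeal h).antisymm hf.fIdeal_subset_statIdeal
  tfae_finish
end

section
/- Let f be an unbounded modulus function. If lim_{t → ∞} h_f(t) = 0, where h_f(t) := limsup_{n → ∞} f(n)/f(t·n) for real t ≥ 1, then every set A ⊆ ℕ of natural density zero satisfies lim_{n → ∞} f(α_A(n))/f(n) = 0; that is, the statistical ideal 𝔍_s is contained in the f-ideal 𝔍_f. -/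
open Filter Set Topology

theorem statIdeal_subset_fIdeal_of_tendsto_hmod (f : ℝ → ℝ) (hf : IsModulus f)
    (h : Tendsto (fun t : ℝ => hmod f t) atTop (nhds 0)) :
    (∀ A : Set ℕ,
      Tendsto (fun n : ℕ => (alphaCount A n : ℝ) / n) atTop (nhds 0) →
        Tendsto (fun n : ℕ => f (alphaCount A n) / f n) atTop (nhds 0)) ∧
    statIdeal ⊆ fIdeal f := by
  obtain ⟨hpos, hzero, hsub, hmono, hcont, htop⟩ := hf
  have hf1 : 0 < f 1 := by
    rcases lt_or_eq_of_le (hpos 1 zero_le_one) with h1 | h1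
    · exact h1
    · exact absurd ((hzero 1 zero_le_one).mp h1.symm) one_ne_zero
  have hfn : ∀ x : ℝ, 1 ≤ x → 0 < f x := fun x hx =>
    lt_of_lt_of_le hf1 (hmono 1 x zero_le_one hx)
  have main : ∀ A : Set ℕ,
      Tendsto (fun n : ℕ => (alphaCount A n : ℝ) / n) atTop (nhds 0) →
      Tendsto (fun n : ℕ => f (alphaCount A n) / f n) atTop (nhds 0) := by
    intro A hA
    rw [NormedAddCommGroup.tendsto_nhds_zero]
    intro ε hε
    have hev : ∀ᶠ t : ℝ in atTop, |hmod f t| < ε / 2 := by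
      have := h.eventually (Metric.ball_mem_nhds 0 (by positivity : (0:ℝ) < ε/2))
      filter_upwards [this] with t ht
      simpa [Real.dist_eq] using ht
    obtain ⟨t, ht, ht1⟩ := (hev.and (eventually_ge_atTop (1:ℝ))).exists
    have hht : hmod f t < ε / 2 := lt_of_le_of_lt (le_abs_self _) ht
    have hbdd : IsBoundedUnder (· ≤ ·) atTop (fun n : ℕ => f n / f (t * n)) := by
      refine ⟨1, ?_⟩
      rw [eventually_map]
      filter_upwards [eventually_ge_atTop 1] with n hn
      have h1n : (1:ℝ) ≤ (n:ℝ) := by exact_mod_cast hn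
      have htn : (1:ℝ) ≤ t * n := by nlinarith
      have hle : f n ≤ f (t * n) :=
        hmono n (t * n) (by linarith) (le_mul_of_one_le_left (by linarith) ht1)
      exact div_le_one_of_le₀ hle (le_of_lt (hfn _ htn))
    have hevn : ∀ᶠ n : ℕ in atTop, f n / f (t * n) < ε / 2 :=
      eventually_lt_of_limsup_lt hht hbdd
    obtain ⟨N₁, hN⟩ := eventually_atTop.mp hevn
    set M : ℕ := max N₁ 1 with hM
    have hM1 : (1:ℝ) ≤ (M:ℝ) := by exact_mod_cast le_max_right N₁ 1
    have hsmall : ∀ᶠ n : ℕ in atTop, (alphaCount A n : ℝ) / n < 1 / t :=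
      hA.eventually_lt_const (by positivity)
    have hbig : ∀ᶠ n : ℕ in atTop, 2 * f M / ε < f n :=
      htop.eventually_gt_atTop _
    filter_upwards [hsmall, hbig, eventually_ge_atTop 1] with n h2 h3 h1
    have h1n : (1:ℝ) ≤ (n:ℝ) := by exact_mod_cast h1
    have hfnpos : 0 < f n := hfn _ h1n
    have hnonneg : 0 ≤ f (alphaCount A n) := hpos _ (Nat.cast_nonneg _)
    rw [Real.norm_eq_abs, abs_of_nonneg (div_nonneg hnonneg hfnpos.le)]
    rw [div_lt_iff₀ hfnpos]
    by_cases hcase : M ≤ alphaCount A n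
    · have hα1 : (1:ℝ) ≤ (alphaCount A n : ℝ) :=
        le_trans hM1 (by exact_mod_cast hcase)
      have htα : (1:ℝ) ≤ t * alphaCount A n :=
        by nlinarith
      have hkey : f (alphaCount A n) / f (t * alphaCount A n) < ε / 2 :=
        hN _ (le_trans (le_max_left N₁ 1) hcase)
      have htαn : t * (alphaCount A n : ℝ) ≤ n := by
        have hn0 : (0:ℝ) < n := by linarith
        have ht0 : (0:ℝ) < t := by linarith
        rw [div_lt_div_iff₀ hn0 ht0] at h2
        nlinarith
      have hle : f (t * alphaCount A n) ≤ f n := hmono _ _ (by linarith) htαn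
      have := (div_lt_iff₀ (hfn _ htα)).mp hkey
      calc f (alphaCount A n) < ε / 2 * f (t * alphaCount A n) := this
        _ ≤ ε / 2 * f n := by nlinarith
        _ < ε * f n := by nlinarith
    · push_neg at hcase
      have hle : f (alphaCount A n) ≤ f M :=
        hmono _ _ (Nat.cast_nonneg _) (by exact_mod_cast hcase.le)
      have hfM : 0 < f M := hfn _ hM1
      have : 2 * f M / ε < f n := h3
      rw [div_lt_iff₀ hε] at this
      nlinarith
  exact ⟨main, fun A hA => main A hA⟩
end

section
/- Let f be an unbounded modulus function. For every A ⊆ ℕ, if the f-density d_f(A) := lim_{n → ∞} f(α_A(n))/f(n) equals 0, then the natural density d(A) := lim_{n → ∞} α_A(n)/n equals 0; that is, the f-ideal 𝔍_f is contained in the statistical ideal 𝔍_s. -/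
open Filter Set Topology

theorem fIdeal_subset_statIdeal (f : ℝ → ℝ) (hf : IsModulus f) :
    (∀ A : Set ℕ,
      Tendsto (fun n : ℕ => f (alphaCount A n) / f n) atTop (nhds 0) →
        Tendsto (fun n : ℕ => (alphaCount A n : ℝ) / n) atTop (nhds 0)) ∧
    fIdeal f ⊆ statIdeal := by
  obtain ⟨hnn, hzero, hsub, hmono, _hcont, htop⟩ := hf
  have f0 : f 0 = 0 := (hzero 0 le_rfl).mpr rfl
  have hmul : ∀ (m : ℕ) (x : ℝ), 0 ≤ x → f (m * x) ≤ m * f x := by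
    intro m
    induction m with
    | zero => intro x hx; simp [f0]
    | succ k ih =>
      intro x hx
      have hx' : ((k + 1 : ℕ) : ℝ) * x = (k : ℝ) * x + x := by push_cast; ring
      rw [hx']
      calc f ((k : ℝ) * x + x) ≤ f ((k : ℝ) * x) + f x :=
            hsub _ _ (by positivity) hx
        _ ≤ (k : ℝ) * f x + f x := by linarith [ih x hx]
        _ = ((k + 1 : ℕ) : ℝ) * f x := by push_cast; ring
  have main : ∀ A : Set ℕ,
      Tendsto (fun n : ℕ => f (alphaCount A n) / f n) atTop (nhds 0) →
        Tendsto (fun n : ℕ => (alphaCount A n : ℝ) / n) atTop (nhds 0) := by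
    intro A hA
    rw [Metric.tendsto_atTop]
    intro ε hε
    set m : ℕ := ⌈1 / ε⌉₊ with hm
    have hm0 : 0 < m := Nat.ceil_pos.mpr (by positivity)
    have hmR : (0 : ℝ) < m := by exact_mod_cast hm0
    have hinv : 1 / ε ≤ (m : ℝ) := Nat.le_ceil _
    have hme : 1 / (m : ℝ) ≤ ε := by
      rw [div_le_iff₀ hmR]
      calc (1 : ℝ) = ε * (1 / ε) := by field_simp
        _ ≤ ε * m := by nlinarith
    have h1 : ∀ᶠ n : ℕ in atTop, 1 ≤ f n := htop.eventually (eventually_ge_atTop 1)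
    have h2 : ∀ᶠ n : ℕ in atTop, f (alphaCount A n) / f n < 1 / m :=
      hA.eventually (gt_mem_nhds (by positivity))
    have h3 : ∀ᶠ n : ℕ in atTop, 1 ≤ n := eventually_ge_atTop 1
    obtain ⟨N, hN⟩ := eventually_atTop.mp ((h1.and h2).and h3)
    refine ⟨N, fun n hn => ?_⟩
    obtain ⟨⟨hfn, hrat⟩, hn1⟩ := hN n hn
    have hnR : (0 : ℝ) < n := by exact_mod_cast hn1
    have hα : (0 : ℝ) ≤ (alphaCount A n : ℝ) := Nat.cast_nonneg _
    have hlt : (alphaCount A n : ℝ) / n < ε := by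
      by_contra hle
      push_neg at hle
      have hαn : ε * n ≤ (alphaCount A n : ℝ) := by
        rw [le_div_iff₀ hnR] at hle; linarith
      have hnm : (n : ℝ) / m ≤ (alphaCount A n : ℝ) := by
        calc (n : ℝ) / m = (1 / m) * n := by ring
          _ ≤ ε * n := by nlinarith
          _ ≤ _ := hαn
      have hfle : f n ≤ (m : ℝ) * f (alphaCount A n) := by
        have h4 : f ((m : ℝ) * ((n : ℝ) / m)) ≤ (m : ℝ) * f ((n : ℝ) / m) :=
          hmul m _ (by positivity)
        have h5 : (m : ℝ) * ((n : ℝ) / m) = (n : ℝ) := by field_simp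
        rw [h5] at h4
        have h6 : f ((n : ℝ) / m) ≤ f (alphaCount A n) :=
          hmono _ _ (by positivity) hnm
        nlinarith
      have hfnpos : (0 : ℝ) < f n := by linarith
      have : (1 : ℝ) / m ≤ f (alphaCount A n) / f n := by
        rw [le_div_iff₀ hfnpos, div_mul_eq_mul_div, one_mul, div_le_iff₀ hmR]
        linarith
      linarith
    have : dist ((alphaCount A n : ℝ) / n) 0 = (alphaCount A n : ℝ) / n := by
      rw [Real.dist_eq, sub_zero, abs_of_nonneg (by positivity)]
    rw [this]
    exact hlt
  exact ⟨main, fun A hA => main A hA⟩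
end

section
/- Let f(x) = log(1 + x). Then the f-ideal 𝔍_f is a proper subset of the statistical ideal 𝔍_s; that is, there exists a set A ⊆ ℕ with lim_{n → ∞} α_A(n)/n = 0 for which lim_{n → ∞} log(1 + α_A(n)) / log(1 + n) = 0 fails. -/
open Filter Set Topology

lemma my_sqrt_atTop : Tendsto Real.sqrt atTop atTop := by
  refine tendsto_atTop_atTop.2 fun b => ⟨(max b 0) ^ 2, fun a ha => ?_⟩
  have h0 : 0 ≤ max b 0 := le_max_right b 0
  calc b ≤ max b 0 := le_max_left b 0
    _ = Real.sqrt ((max b 0) ^ 2) := by rw [Real.sqrt_sq h0]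
    _ ≤ Real.sqrt a := Real.sqrt_le_sqrt ha

lemma my_inv_sqrt : Tendsto (fun n : ℕ => 2 / Real.sqrt n) atTop (nhds 0) :=
  Tendsto.div_atTop tendsto_const_nhds (my_sqrt_atTop.comp tendsto_natCast_atTop_atTop)

lemma my_sqrt_div : Tendsto (fun n : ℕ => Real.sqrt (1 + n) / n) atTop (nhds 0) := by
  apply squeeze_zero' (Eventually.of_forall fun n => by positivity)
    (g := fun n : ℕ => 2 / Real.sqrt n) _ my_inv_sqrt
  filter_upwards [eventually_ge_atTop 1] with n hn
  have hn1 : (1 : ℝ) ≤ n := by exact_mod_cast hn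
  have hns : Real.sqrt n * Real.sqrt n = n := Real.mul_self_sqrt (by linarith)
  have h1 : Real.sqrt (1 + n) ≤ 2 * Real.sqrt n := by
    rw [show (2 : ℝ) * Real.sqrt n = Real.sqrt (4 * n) by
      rw [show (4 : ℝ) * n = 2 ^ 2 * n by ring, Real.sqrt_mul (by positivity),
        Real.sqrt_sq (by norm_num)]]
    exact Real.sqrt_le_sqrt (by linarith)
  have hs1 : (1 : ℝ) ≤ Real.sqrt n := by
    nlinarith [Real.sqrt_nonneg (n : ℝ)]
  rw [div_le_div_iff₀ (by linarith) (by positivity)]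
  calc Real.sqrt (1 + n) * Real.sqrt n ≤ 2 * Real.sqrt n * Real.sqrt n := by
        nlinarith [Real.sqrt_nonneg ((n:ℝ))]
    _ = 2 * n := by rw [mul_assoc, hns]

lemma alpha_squares (n : ℕ) :
    alphaCount {m | ∃ k : ℕ, 1 ≤ k ∧ m = k ^ 2} n = Nat.sqrt n := by
  have himg : {m | ∃ k : ℕ, 1 ≤ k ∧ m = k ^ 2} ∩ Set.Icc 1 n
      = (fun k => k ^ 2) '' Set.Icc 1 (Nat.sqrt n) := by
    ext m
    constructor
    · rintro ⟨⟨k, hk1, rfl⟩, h1, h2⟩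
      exact ⟨k, ⟨hk1, Nat.le_sqrt.2 (by nlinarith)⟩, rfl⟩
    · rintro ⟨k, ⟨hk1, hk2⟩, rfl⟩
      refine ⟨⟨k, hk1, rfl⟩, by nlinarith, ?_⟩
      calc k ^ 2 ≤ Nat.sqrt n ^ 2 := by nlinarith
        _ ≤ n := Nat.sqrt_le' n
  rw [alphaCount, himg, Set.ncard_image_of_injOn, ← Finset.coe_Icc, Set.ncard_coe_finset,
    Nat.card_Icc]
  · omega
  · intro a _ b _ h
    nlinarith [sq_nonneg (a - b)]

/-- The subset direction. -/
lemma my_subset : fIdeal (fun x : ℝ => Real.log (1 + x)) ⊆ statIdeal := by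
  intro A hA
  have h2 : ∀ᶠ n : ℕ in atTop,
      Real.log (1 + (alphaCount A n : ℝ)) / Real.log (1 + (n : ℝ)) < 1 / 2 :=
    hA.eventually_lt_const (by norm_num)
  apply squeeze_zero' (Eventually.of_forall fun n => by positivity)
    (g := fun n : ℕ => Real.sqrt (1 + n) / n) _ my_sqrt_div
  filter_upwards [h2, eventually_ge_atTop 1] with n hn hn1
  have hn1' : (1 : ℝ) ≤ n := by exact_mod_cast hn1
  have hlogn : 0 < Real.log (1 + (n : ℝ)) := Real.log_pos (by linarith)
  have ha0 : (0 : ℝ) ≤ (alphaCount A n : ℝ) := Nat.cast_nonneg _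
  have h3 : Real.log (1 + (alphaCount A n : ℝ)) < Real.log (1 + (n:ℝ)) / 2 := by
    rw [div_lt_iff₀ hlogn] at hn
    linarith
  have h4 : Real.log (1 + (n:ℝ)) / 2 = Real.log (Real.sqrt (1 + n)) :=
    (Real.log_sqrt (by linarith)).symm
  have h5 : (1 : ℝ) + alphaCount A n ≤ Real.sqrt (1 + n) := by
    by_contra hcon
    push_neg at hcon
    have := Real.log_le_log (by positivity) hcon.le
    rw [← h4] at this
    linarith
  have : (alphaCount A n : ℝ) ≤ Real.sqrt (1 + n) := by linarith
  gcongr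

lemma my_not_tendsto :
    ¬ Tendsto
        (fun n : ℕ => Real.log (1 + (Nat.sqrt n : ℝ)) / Real.log (1 + (n : ℝ)))
        atTop (nhds 0) := by
  intro h
  have h2 := h.eventually_lt_const (show (0:ℝ) < 1/4 by norm_num)
  rw [eventually_atTop] at h2
  obtain ⟨N, hN⟩ := h2
  set n := max N 2 with hn
  have hn2 : (2 : ℕ) ≤ n := le_max_right N 2
  have hval := hN n (le_max_left N 2)
  have hn2' : (2 : ℝ) ≤ (n : ℝ) := by exact_mod_cast hn2
  have hlogn : 0 < Real.log n := Real.log_pos (by linarith)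
  -- √n ≤ 1 + Nat.sqrt n
  have hs : Real.sqrt n ≤ 1 + (Nat.sqrt n : ℝ) := by
    have h1 : (n : ℝ) < ((Nat.sqrt n : ℝ) + 1) ^ 2 := by
      have := Nat.lt_succ_sqrt' n
      exact_mod_cast this
    have := (Real.sqrt_lt' (by positivity)).2 h1
    linarith
  have hnum : Real.log n / 2 ≤ Real.log (1 + (Nat.sqrt n : ℝ)) := by
    rw [← Real.log_sqrt (by positivity)]
    exact Real.log_le_log (Real.sqrt_pos.2 (by linarith)) hs
  have hden : Real.log (1 + (n : ℝ)) ≤ 2 * Real.log n := by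
    rw [show (2:ℝ) * Real.log n = Real.log ((n:ℝ)^2) by
      rw [Real.log_pow]; push_cast; ring]
    exact Real.log_le_log (by linarith) (by nlinarith)
  have hdenpos : 0 < Real.log (1 + (n : ℝ)) := Real.log_pos (by linarith)
  have : (1:ℝ)/4 ≤ Real.log (1 + (Nat.sqrt n : ℝ)) / Real.log (1 + (n : ℝ)) := by
    rw [le_div_iff₀ hdenpos]
    calc (1:ℝ)/4 * Real.log (1 + (n:ℝ)) ≤ (1:ℝ)/4 * (2 * Real.log n) := by linarith
      _ = Real.log n / 2 := by ring
      _ ≤ Real.log (1 + (Nat.sqrt n : ℝ)) := hnum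
  linarith

theorem fIdeal_log_ssubset_statIdeal :
    fIdeal (fun x : ℝ => Real.log (1 + x)) ⊂ statIdeal ∧
    ∃ A : Set ℕ,
      Tendsto (fun n : ℕ => (alphaCount A n : ℝ) / n) atTop (nhds 0) ∧
      ¬ Tendsto
          (fun n : ℕ => Real.log (1 + (alphaCount A n : ℝ)) / Real.log (1 + (n : ℝ)))
          atTop (nhds 0) := by
  set A : Set ℕ := {m | ∃ k : ℕ, 1 ≤ k ∧ m = k ^ 2} with hA
  have hcount : ∀ n, alphaCount A n = Nat.sqrt n := alpha_squares
  have hstat : Tendsto (fun n : ℕ => (alphaCount A n : ℝ) / n) atTop (nhds 0) := by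
    apply squeeze_zero' (Eventually.of_forall fun n => by positivity)
      (g := fun n : ℕ => Real.sqrt (1 + n) / n) _ my_sqrt_div
    filter_upwards with n
    rw [hcount]
    gcongr
    calc (Nat.sqrt n : ℝ) ≤ Real.sqrt n := Real.nat_sqrt_le_real_sqrt
      _ ≤ Real.sqrt (1 + n) := Real.sqrt_le_sqrt (by linarith)
  have hnot : ¬ Tendsto
      (fun n : ℕ => Real.log (1 + (alphaCount A n : ℝ)) / Real.log (1 + (n : ℝ)))
      atTop (nhds 0) := by
    simp only [hcount]
    exact my_not_tendsto
  refine ⟨⟨my_subset, fun hsub => hnot (hsub hstat)⟩, A, hstat, hnot⟩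
end

section
/- There exists an unbounded modulus function f such that the sequence n ↦ f(n)/f(2n) does not converge (indeed f(2^n)/f(2^{n+1}) equals 1 for odd n and 1/2 for even n), while nevertheless the f-ideal 𝔍_f equals the statistical ideal 𝔍_s. -/
open Filter Set Topology

/-!
The witness is `F x = sup_k min (x / 2^k, 2^(k+1))`. Each term is a concave piecewise linear
function vanishing at `0`, so `F` is a modulus; by AM-GM each term is at most `√(2x)`, and the
term with `2^k ≤ √x < 2^(k+1)` is at least `√x`. Hence `F` is comparable to `√`, and
`F(α)/F(n)` tends to `0` exactly when `α/n` does. On powers of two `F(2^m) = 2^⌈m/2⌉`, so the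
ratio `F(2^m)/F(2^(m+1))` alternates between `1/2` and `1`.
-/

noncomputable def dyadicModulus (x : ℝ) : ℝ := ⨆ k : ℕ, min (x / 2 ^ k) (2 ^ (k + 1))

lemma min_add_le_min_add_min {s t b : ℝ} (hs : 0 ≤ s) (ht : 0 ≤ t) (hb : 0 ≤ b) :
    min (s + t) b ≤ min s b + min t b := by
  rcases le_total s b with hsb | hsb <;> rcases le_total t b with htb | htb <;>
    simp only [min_eq_left, min_eq_right, hsb, htb] <;>
    first | exact min_le_left _ _ | exact (min_le_right _ _).trans (by linarith)

lemma tendsto_sqrt_nhds_zero_iff {ι : Type*} {l : Filter ι} {g : ι → ℝ} (hg : ∀ i, 0 ≤ g i) :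
    Tendsto (fun i => √(g i)) l (𝓝 0) ↔ Tendsto g l (𝓝 0) := by
  refine ⟨fun h => ?_, fun h => by simpa using h.sqrt⟩
  simpa [Real.sq_sqrt (hg _)] using h.pow 2

lemma not_exists_tendsto_of_odd_even {r : ℕ → ℝ} {a b : ℝ} (hab : a ≠ b)
    (hodd : ∀ n, Odd n → r n = a) (heven : ∀ n, Even n → r n = b) :
    ¬ ∃ c, Tendsto r atTop (𝓝 c) := by
  rintro ⟨c, hc⟩
  have hac : a = c := tendsto_nhds_unique_of_frequently_eq tendsto_const_nhds hc <|
    frequently_atTop.2 fun n => ⟨2 * n + 1, by omega, (hodd _ (odd_two_mul_add_one n)).symm⟩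
  have hbc : b = c := tendsto_nhds_unique_of_frequently_eq tendsto_const_nhds hc <|
    frequently_atTop.2 fun n => ⟨2 * n, by omega, (heven _ (even_two_mul n)).symm⟩
  exact hab (hac.trans hbc.symm)

/-- If `f` is comparable to `√` on `ℕ`, then `f(α)/f(n)` is comparable to `√(α/n)`. -/
lemma fIdeal_eq_statIdeal_of_sqrt_le {f : ℝ → ℝ} {C : ℝ} (hlow : ∀ n : ℕ, √n ≤ f n)
    (hup : ∀ n : ℕ, f n ≤ C * √n) : fIdeal f = statIdeal := by
  have hC : 0 < C := zero_lt_one.trans_le (by simpa using (hlow 1).trans (hup 1))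
  ext A
  set α := fun n => (alphaCount A n : ℝ)
  have hα : ∀ n, 0 ≤ α n := fun n => Nat.cast_nonneg _
  have hfα : ∀ n, 0 ≤ f (α n) := fun n => (Real.sqrt_nonneg _).trans (hlow _)
  have hfn : ∀ n : ℕ, 1 ≤ n → 0 < f n := fun n hn =>
    (Real.sqrt_pos.2 (by exact_mod_cast hn)).trans_le (hlow n)
  have hθ : (fun n : ℕ => f (α n) / f n) =Θ[atTop] fun n => √(α n / n) := by
    refine ⟨.of_bound C ?_, .of_bound C ?_⟩ <;>
      filter_upwards [eventually_ge_atTop 1] with n hn <;>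
      have hsn : 0 < √(n : ℝ) := Real.sqrt_pos.2 (by exact_mod_cast hn) <;>
      rw [Real.norm_of_nonneg (div_nonneg (hfα n) (hfn n hn).le),
        Real.norm_of_nonneg (Real.sqrt_nonneg _), Real.sqrt_div (hα n)]
    · rw [div_le_iff₀ (hfn n hn), mul_div_assoc', div_mul_eq_mul_div, le_div_iff₀ hsn]
      calc f (α n) * √n ≤ C * √(α n) * √n := by gcongr; exact hup _
        _ ≤ C * √(α n) * f n := by gcongr; exact hlow n
    · rw [div_le_iff₀ hsn, mul_div_assoc', div_mul_eq_mul_div, le_div_iff₀ (hfn n hn)]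
      calc √(α n) * f n ≤ √(α n) * (C * √n) := by gcongr; exact hup n
        _ = C * √(α n) * √n := by ring
        _ ≤ C * f (α n) * √n := by gcongr; exact hlow _
  exact hθ.tendsto_zero_iff.trans
    (tendsto_sqrt_nhds_zero_iff fun n => div_nonneg (hα n) (Nat.cast_nonneg n))

namespace dyadicModulus

lemma term_le_abs (x : ℝ) (k : ℕ) : min (x / 2 ^ k) ((2 : ℝ) ^ (k + 1)) ≤ |x| :=
  (min_le_left _ _).trans <| (div_le_div_of_nonneg_right (le_abs_self x) (by positivity)).trans <|
    div_le_self (abs_nonneg x) (one_le_pow₀ one_le_two)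

lemma term_le (x : ℝ) (k : ℕ) : min (x / 2 ^ k) ((2 : ℝ) ^ (k + 1)) ≤ dyadicModulus x :=
  le_ciSup ⟨|x|, by rintro _ ⟨k, rfl⟩; exact term_le_abs x k⟩ k

lemma le_of_forall_term_le {x c : ℝ} (h : ∀ k : ℕ, min (x / 2 ^ k) ((2 : ℝ) ^ (k + 1)) ≤ c) :
    dyadicModulus x ≤ c :=
  ciSup_le h

lemma nonneg {x : ℝ} (hx : 0 ≤ x) : 0 ≤ dyadicModulus x :=
  (le_min (by positivity) (by positivity)).trans (term_le x 0)

lemma pos {x : ℝ} (hx : 0 < x) : 0 < dyadicModulus x :=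
  (lt_min (by simpa using hx) (by norm_num)).trans_le (term_le x 0)

lemma le_self {x : ℝ} (hx : 0 ≤ x) : dyadicModulus x ≤ x :=
  le_of_forall_term_le fun k => (term_le_abs x k).trans (abs_of_nonneg hx).le

lemma zero : dyadicModulus 0 = 0 :=
  (le_self le_rfl).antisymm (nonneg le_rfl)

lemma mono {x y : ℝ} (h : x ≤ y) : dyadicModulus x ≤ dyadicModulus y :=
  le_of_forall_term_le fun k => (min_le_min_right _ (by gcongr)).trans (term_le y k)

lemma add_le {x y : ℝ} (hx : 0 ≤ x) (hy : 0 ≤ y) :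
    dyadicModulus (x + y) ≤ dyadicModulus x + dyadicModulus y :=
  le_of_forall_term_le fun k => by
    rw [add_div]
    exact (min_add_le_min_add_min (by positivity) (by positivity) (by positivity)).trans
      (add_le_add (term_le x k) (term_le y k))

/-- AM-GM: `min (x / 2^k) (2^(k+1))² ≤ (x / 2^k) * 2^(k+1) = 2x`. -/
lemma le_sqrt_two_mul {x : ℝ} (hx : 0 ≤ x) : dyadicModulus x ≤ √(2 * x) :=
  le_of_forall_term_le fun k => by
    rw [Real.le_sqrt (by positivity) (by positivity), sq]
    calc min (x / 2 ^ k) (2 ^ (k + 1)) * min (x / 2 ^ k) (2 ^ (k + 1))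
        ≤ x / 2 ^ k * 2 ^ (k + 1) := by gcongr; exacts [min_le_left _ _, min_le_right _ _]
      _ = 2 * x := by rw [pow_succ]; field_simp

lemma natCast_le (n : ℕ) : dyadicModulus n ≤ √2 * √n := by
  rw [← Real.sqrt_mul zero_le_two]
  exact le_sqrt_two_mul n.cast_nonneg

lemma sqrt_le {x : ℝ} (hx : 1 ≤ x) : √x ≤ dyadicModulus x := by
  obtain ⟨k, hk, hk'⟩ := exists_nat_pow_near (Real.one_le_sqrt.2 hx) one_lt_two
  refine (le_min ?_ hk'.le).trans (term_le x k)
  rw [le_div_iff₀ (by positivity)]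
  calc √x * 2 ^ k ≤ √x * √x := by gcongr
    _ = x := Real.mul_self_sqrt (by linarith)

lemma sqrt_natCast_le (n : ℕ) : √n ≤ dyadicModulus n := by
  rcases n.eq_zero_or_pos with rfl | hn
  · simp [zero]
  · exact sqrt_le (by exact_mod_cast hn)

lemma two_pow (m : ℕ) : dyadicModulus (2 ^ m) = 2 ^ ((m + 1) / 2) := by
  have hdiv : ∀ k e : ℕ, (2 : ℝ) ^ m / 2 ^ k ≤ 2 ^ e ↔ m ≤ e + k := fun k e => by
    rw [div_le_iff₀ (by positivity), ← pow_add, pow_le_pow_iff_right₀ one_lt_two]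
  refine (le_of_forall_term_le fun k => ?_).antisymm ?_
  · rcases le_or_gt ((m + 1) / 2) k with h | h
    · exact (min_le_left _ _).trans ((hdiv k _).2 (by omega))
    · exact (min_le_right _ _).trans (pow_le_pow_right₀ one_le_two (by omega))
  · refine (le_min ?_ (pow_le_pow_right₀ one_le_two (by omega))).trans (term_le _ (m / 2))
    rw [le_div_iff₀ (by positivity), ← pow_add]
    exact pow_le_pow_right₀ one_le_two (by omega)

lemma two_pow_div_of_odd {m : ℕ} (hm : Odd m) :
    dyadicModulus (2 ^ m) / dyadicModulus (2 ^ (m + 1)) = 1 := by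
  obtain ⟨j, rfl⟩ := hm
  rw [two_pow, two_pow, show (2 * j + 1 + 1 + 1) / 2 = (2 * j + 1 + 1) / 2 by omega]
  exact div_self (by positivity)

lemma two_pow_div_of_even {m : ℕ} (hm : Even m) :
    dyadicModulus (2 ^ m) / dyadicModulus (2 ^ (m + 1)) = 1 / 2 := by
  obtain ⟨j, rfl⟩ := hm
  rw [two_pow, two_pow, show (j + j + 1) / 2 = j by omega,
    show (j + j + 1 + 1) / 2 = j + 1 by omega, pow_succ, div_mul_cancel_left₀ (by positivity),
    one_div]

lemma isModulus : IsModulus dyadicModulus := by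
  refine ⟨fun x hx => nonneg hx, fun x hx => ⟨fun h => ?_, fun h => h ▸ zero⟩,
    fun x y hx hy => add_le hx hy, fun x y _ h => mono h, ?_, ?_⟩
  · by_contra hne
    exact (pos (hx.lt_of_ne' hne)).ne' h
  · rw [ContinuousWithinAt, zero]
    exact squeeze_zero' (eventually_nhdsWithin_of_forall fun x hx => nonneg hx)
      (eventually_nhdsWithin_of_forall fun x hx => le_self hx)
      (tendsto_id.mono_left nhdsWithin_le_nhds)
  · exact tendsto_atTop_mono sqrt_natCast_le
      (Real.tendsto_sqrt_atTop.comp tendsto_natCast_atTop_atTop)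

end dyadicModulus

theorem exists_modulus_ratio_not_convergent_fIdeal_eq_statIdeal :
    ∃ f : ℝ → ℝ, IsModulus f ∧
      (∀ n : ℕ, Odd n → f (2 ^ n) / f (2 ^ (n + 1)) = 1) ∧
      (∀ n : ℕ, Even n → f (2 ^ n) / f (2 ^ (n + 1)) = 1 / 2) ∧
      (¬ ∃ a : ℝ, Tendsto (fun n : ℕ => f n / f (2 * n)) atTop (nhds a)) ∧
      fIdeal f = statIdeal := by
  refine ⟨dyadicModulus, dyadicModulus.isModulus, fun n => dyadicModulus.two_pow_div_of_odd,
    fun n => dyadicModulus.two_pow_div_of_even, ?_,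
    fIdeal_eq_statIdeal_of_sqrt_le dyadicModulus.sqrt_natCast_le dyadicModulus.natCast_le⟩
  rintro ⟨a, ha⟩
  refine not_exists_tendsto_of_odd_even (by norm_num) (fun m => dyadicModulus.two_pow_div_of_odd)
    (fun m => dyadicModulus.two_pow_div_of_even) ⟨a, ?_⟩
  refine (ha.comp (tendsto_pow_atTop_atTop_of_one_lt one_lt_two)).congr fun m => ?_
  simp [pow_succ, mul_comm]
end

section
/- Let f : ℕ ∪ {0} → ℝ⁺ be defined recursively by f(0) = 0, f(1) = 1, f(2) = 2, and for n ∈ ℕ and α ∈ [1, 2^n], f(2^n + α) = f(2^n) if n is odd and f(2^n + α) = f(2^n) + f(α) if n is even. Then f is subadditive on the natural numbers: f(w + z) ≤ f(w) + f(z) for all w, z ∈ ℕ. -/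
/-!
On each block `[2^k, 2^(k+1)]` the recursion says that `f` is constant (`k` odd) or is `f (2^k)`
plus a shifted copy of `f` (`k` even). This makes `f` monotone, by induction on the blocks.
For subadditivity write `w ≤ z` and `2^(k+1) ≤ w + z < 2^(k+2)`, so that `z ≥ 2^k`. When `k + 1`
is even, either `z` lies in the same block as `w + z` and the shifted copies reduce the claim
to smaller arguments, or `z` lies in the odd block below, where `f z = f (2^k) = f (2^(k+1))`.
When `k + 1` is odd, `f (w + z) = f (2^(k+1))`, which is `2 f (2^k)` and is bounded by splitting
`z` in its even block, or is at most `f z` by monotonicity.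
-/

structure IsRecursiveModulus (f : ℕ → ℝ) : Prop where
  zero : f 0 = 0
  one : f 1 = 1
  two : f 2 = 2
  two_pow_add : ∀ n : ℕ, 1 ≤ n → ∀ α : ℕ, 1 ≤ α → α ≤ 2 ^ n →
    f (2 ^ n + α) = if Odd n then f (2 ^ n) else f (2 ^ n) + f α

namespace IsRecursiveModulus

variable {f : ℕ → ℝ}

theorem apply_of_odd (hf : IsRecursiveModulus f) {k z : ℕ} (hk : Odd k)
    (hlo : 2 ^ k ≤ z) (hhi : z ≤ 2 ^ (k + 1)) : f z = f (2 ^ k) := by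
  obtain rfl | hlt := hlo.eq_or_lt
  · rfl
  have hz : z = 2 ^ k + (z - 2 ^ k) := by omega
  rw [hz, hf.two_pow_add k hk.pos _ (by omega) (by rw [pow_succ] at hhi; omega), if_pos hk]

-- The case `k = 0`, not covered by the recursion, is `f 2 = f 1 + f 1`.
theorem apply_of_even (hf : IsRecursiveModulus f) {k z : ℕ} (hk : Even k)
    (hlo : 2 ^ k ≤ z) (hhi : z ≤ 2 ^ (k + 1)) : f z = f (2 ^ k) + f (z - 2 ^ k) := by
  obtain rfl | hlt := hlo.eq_or_lt
  · simp [hf.zero]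
  obtain rfl | hk0 := k.eq_zero_or_pos
  · obtain rfl : z = 2 := by simp at hlt hhi; omega
    norm_num [hf.one, hf.two]
  have hz : z = 2 ^ k + (z - 2 ^ k) := by omega
  rw [hz, hf.two_pow_add k hk0 _ (by omega) (by rw [pow_succ] at hhi; omega),
    if_neg (Nat.not_odd_iff_even.mpr hk), Nat.add_sub_cancel_left]

theorem monotone (hf : IsRecursiveModulus f) : Monotone f := by
  refine monotone_nat_of_le_succ fun m => ?_
  induction m using Nat.strong_induction_on with
  | _ m ih =>
  obtain rfl | hm := m.eq_zero_or_pos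
  · simp [hf.zero, hf.one]
  set n := Nat.log 2 m
  have hlo : 2 ^ n ≤ m := Nat.pow_log_le_self 2 hm.ne'
  have hhi : m < 2 ^ (n + 1) := Nat.lt_pow_succ_log_self one_lt_two m
  rcases Nat.even_or_odd n with hn | hn
  · have hshift : m + 1 - 2 ^ n = m - 2 ^ n + 1 := by omega
    rw [hf.apply_of_even hn hlo hhi.le, hf.apply_of_even hn (by omega) hhi, hshift]
    have := ih (m - 2 ^ n) (by have := Nat.one_le_two_pow (n := n); omega)
    linarith
  · rw [hf.apply_of_odd hn hlo hhi.le, hf.apply_of_odd hn (by omega) hhi]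

theorem nonneg (hf : IsRecursiveModulus f) (n : ℕ) : 0 ≤ f n :=
  hf.zero ▸ hf.monotone (Nat.zero_le n)

theorem apply_add_le_of_even_log (hf : IsRecursiveModulus f) {k w z : ℕ} (hk : Odd k)
    (hlo : 2 ^ (k + 1) ≤ w + z) (hhi : w + z < 2 ^ (k + 2)) (hwz : w ≤ z)
    (ih : ∀ a b, a + b < w + z → f (a + b) ≤ f a + f b) : f (w + z) ≤ f w + f z := by
  have hk1 : Even (k + 1) := hk.add_one
  have hpow : 2 ^ (k + 2) = 2 ^ (k + 1) + 2 ^ (k + 1) := by rw [pow_succ]; ring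
  rw [hf.apply_of_even hk1 hlo hhi.le]
  rcases le_or_gt (2 ^ (k + 1)) z with hz | hz
  · have hsplit : w + z - 2 ^ (k + 1) = w + (z - 2 ^ (k + 1)) := by omega
    have := ih w (z - 2 ^ (k + 1)) (by have := Nat.one_le_two_pow (n := k); omega)
    rw [hf.apply_of_even hk1 hz (by omega), hsplit]
    linarith
  · have hfz : f z = f (2 ^ k) := hf.apply_of_odd hk (by omega) hz.le
    have htop : f (2 ^ (k + 1)) = f (2 ^ k) := hf.apply_of_odd hk (by omega) le_rfl
    have := hf.monotone (show w + z - 2 ^ (k + 1) ≤ w by omega)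
    linarith

theorem apply_add_le_of_odd_log (hf : IsRecursiveModulus f) {k w z : ℕ} (hk : Even k)
    (hlo : 2 ^ (k + 1) ≤ w + z) (hhi : w + z < 2 ^ (k + 2)) (hwz : w ≤ z)
    (ih : ∀ a b, a + b < w + z → f (a + b) ≤ f a + f b) : f (w + z) ≤ f w + f z := by
  have hk1 : Odd (k + 1) := hk.add_one
  have hpow : 2 ^ (k + 1) = 2 ^ k + 2 ^ k := by rw [pow_succ]; ring
  rw [hf.apply_of_odd hk1 hlo hhi.le]
  rcases le_or_gt z (2 ^ (k + 1)) with hz | hz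
  · have htop : f (2 ^ (k + 1)) = f (2 ^ k) + f (2 ^ k) := by
      rw [hf.apply_of_even hk (by omega) le_rfl, hpow, Nat.add_sub_cancel]
    have hfz : f z = f (2 ^ k) + f (z - 2 ^ k) := hf.apply_of_even hk (by omega) hz
    have hmid := hf.monotone (show 2 ^ k ≤ w + (z - 2 ^ k) by omega)
    have := ih w (z - 2 ^ k) (by have := Nat.one_le_two_pow (n := k); omega)
    linarith
  · linarith [hf.monotone hz.le, hf.nonneg w]

theorem apply_add_le (hf : IsRecursiveModulus f) (w z : ℕ) : f (w + z) ≤ f w + f z := by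
  induction hm : w + z using Nat.strong_induction_on generalizing w z with
  | _ m ih =>
  subst hm
  replace ih : ∀ a b, a + b < w + z → f (a + b) ≤ f a + f b := fun a b h => ih _ h a b rfl
  wlog hwz : w ≤ z generalizing w z
  · rw [add_comm w, add_comm (f w)]
    exact this z w (fun a b h => ih a b (by omega)) (by omega)
  obtain rfl | hw := w.eq_zero_or_pos
  · simp [hf.zero]
  have hlo : 2 ^ Nat.log 2 (w + z) ≤ w + z := Nat.pow_log_le_self 2 (by omega)
  have hhi : w + z < 2 ^ (Nat.log 2 (w + z) + 1) := Nat.lt_pow_succ_log_self one_lt_two _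
  obtain ⟨k, hk⟩ : ∃ k, Nat.log 2 (w + z) = k + 1 :=
    Nat.exists_eq_add_one.mpr (Nat.log_pos one_lt_two (by omega))
  rw [hk] at hlo hhi
  rcases Nat.even_or_odd k with hk | hk
  · exact hf.apply_add_le_of_odd_log hk hlo hhi hwz ih
  · exact hf.apply_add_le_of_even_log hk hlo hhi hwz ih

end IsRecursiveModulus

theorem subadditive_of_recursive_modulus_general (f : ℕ → ℝ)
    (h0 : f 0 = 0) (h1 : f 1 = 1) (h2 : f 2 = 2)
    (hrec : ∀ n : ℕ, 1 ≤ n → ∀ α : ℕ, 1 ≤ α → α ≤ 2 ^ n →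
      f (2 ^ n + α) = if Odd n then f (2 ^ n) else f (2 ^ n) + f α) :
    ∀ w z : ℕ, f (w + z) ≤ f w + f z :=
  (IsRecursiveModulus.mk h0 h1 h2 hrec).apply_add_le

theorem subadditive_of_recursive_modulus (f : ℕ → ℝ)
    (hpos : ∀ n : ℕ, 0 ≤ f n)
    (h0 : f 0 = 0) (h1 : f 1 = 1) (h2 : f 2 = 2)
    (hrec : ∀ n : ℕ, 1 ≤ n → ∀ α : ℕ, 1 ≤ α → α ≤ 2 ^ n →
      f (2 ^ n + α) = if Odd n then f (2 ^ n) else f (2 ^ n) + f α) :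
    ∀ w z : ℕ, f (w + z) ≤ f w + f z :=
  subadditive_of_recursive_modulus_general f h0 h1 h2 hrec
end
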